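/- arXiv:2601.21466 — 2 statements merged into one kernel-verified Lean document; each statement's English description precedes it below -/
import Mathlib

section
/- The right ideal I = ⟨(q+1)²⟩ generated by (q+1)^{*2} = (q+1)² in the ring (ℍ[q], +, *) is quasi prime: whenever P*Q ∈ I for P, Q ∈ ℍ[q], either P ∈ I or Q^s ∈ I. -/
/-- The quaternions ℍ. -/
abbrev Hq : Type := Quaternion ℝ

/-- A right ideal of a (possibly noncommutative) ring. -/
structure RightIdeal (R : Type) [Ring R] where
  carrier : Set R
  zero_mem : (0 : R) ∈ carrier
  add_mem : ∀ {x y : R}, x ∈ carrier → y ∈ carrier → x + y ∈ carrier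
  mul_mem_right : ∀ {x : R} (y : R), x ∈ carrier → x * y ∈ carrier

/-- The right ideal generated by a set. -/
def RightIdeal.span {R : Type} [Ring R] (s : Set R) : RightIdeal R where
  carrier := {x | ∀ I : RightIdeal R, s ⊆ I.carrier → x ∈ I.carrier}
  zero_mem := fun I _ => I.zero_mem
  add_mem := fun hx hy I hs => I.add_mem (hx I hs) (hy I hs)
  mul_mem_right := fun y hx I hs => I.mul_mem_right y (hx I hs)

/-- The regular conjugate `P^c` of a one-variable slice regular polynomial `P = Σ q^ℓ a_ℓ`,
namely `P^c = Σ q^ℓ (conj a_ℓ)`.  (The ring ℍ[q] with the slice product coincides with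
`Polynomial Hq` with its usual multiplication.) -/
noncomputable def pconj (P : Polynomial Hq) : Polynomial Hq :=
  ∑ k ∈ P.support, Polynomial.X ^ k * Polynomial.C (star (P.coeff k))

/-- The symmetrization `P^s = P * P^c`. -/
noncomputable def psymm (P : Polynomial Hq) : Polynomial Hq := P * pconj P

/-- A right ideal `I` is quasi prime if `P*Q ∈ I` implies `P ∈ I` or `Q^s ∈ I`. -/
def QuasiPrime (I : RightIdeal (Polynomial Hq)) : Prop :=
  ∀ P Q : Polynomial Hq, P * Q ∈ I.carrier → P ∈ I.carrier ∨ psymm Q ∈ I.carrier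

/-- A right ideal `I` is completely prime if `P*Q ∈ I` and `P*I ⊆ I` imply
`P ∈ I` or `Q ∈ I`. -/
def CompletelyPrime (I : RightIdeal (Polynomial Hq)) : Prop :=
  ∀ P Q : Polynomial Hq, P * Q ∈ I.carrier → (∀ R ∈ I.carrier, P * R ∈ I.carrier) →
    P ∈ I.carrier ∨ Q ∈ I.carrier

/-- The (right) radical `√I`: the intersection of all completely prime right ideals
containing `I`. -/
def radicalSet (I : RightIdeal (Polynomial Hq)) : Set (Polynomial Hq) :=
  ⋂ J ∈ {J : RightIdeal (Polynomial Hq) | CompletelyPrime J ∧ I.carrier ⊆ J.carrier}, J.carrier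

/-! Since `-1` is central in ℍ, evaluation at `-1` is multiplicative and `q + 1 = q - (-1)` divides
`P` exactly when `P(-1) = 0`. Over a domain this makes `q + 1` behave like a prime: if
`(q+1)^n ∣ P * Q` and `q + 1 ∤ Q`, peel off one factor `q + 1` of `P` at a time and cancel it.
If instead `Q = (q+1) * Q'`, then, regular conjugation being an anti-automorphism that fixes the
central polynomial `q + 1`, `Q^s = (q+1) Q' Q'^c (q+1) = (q+1)^2 Q'^s`. -/

open Polynomial

theorem RightIdeal.mem_span_singleton {R : Type} [Ring R] {g x : R} :
    x ∈ (RightIdeal.span {g}).carrier ↔ g ∣ x := by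
  constructor
  · intro h
    exact h ⟨{x | g ∣ x}, dvd_zero g, dvd_add, fun y hx => hx.mul_right y⟩ (by simp)
  · rintro ⟨r, rfl⟩ I hg
    exact I.mul_mem_right r (hg rfl)

namespace Polynomial

section CentralRoot

variable {R : Type*} [Ring R] {a : R}

theorem eval_mul_of_forall_commute (ha : ∀ b, Commute b a) (p q : R[X]) :
    (p * q).eval a = p.eval a * q.eval a :=
  eval₂_mul_noncomm _ _ fun _ => ha _

theorem isRoot_X_sub_C_mul (ha : ∀ b, Commute b a) (r : R[X]) : ((X - C a) * r).IsRoot a := by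
  simp [IsRoot, eval_mul_of_forall_commute ha]

theorem X_sub_C_dvd_iff_isRoot_of_forall_commute [Nontrivial R] (ha : ∀ b, Commute b a)
    {p : R[X]} : X - C a ∣ p ↔ p.IsRoot a := by
  refine ⟨fun ⟨r, hr⟩ => hr ▸ isRoot_X_sub_C_mul ha r, fun hp => ?_⟩
  obtain ⟨c, hc⟩ : ∃ c, p %ₘ (X - C a) = C c :=
    ⟨_, eq_C_of_degree_le_zero <| Nat.WithBot.lt_one_iff_le_zero.mp <|
      degree_X_sub_C a ▸ degree_modByMonic_lt p (monic_X_sub_C a)⟩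
  have hdecomp := congrArg (eval a) (modByMonic_add_div p (X - C a))
  rw [eval_add, (isRoot_X_sub_C_mul ha _).eq_zero, add_zero, hc, eval_C] at hdecomp
  rw [← modByMonic_eq_zero_iff_dvd (monic_X_sub_C a), hc, hdecomp, hp.eq_zero, C_0]

theorem X_sub_C_dvd_of_dvd_mul [IsDomain R] (ha : ∀ b, Commute b a) {p q : R[X]}
    (hpq : X - C a ∣ p * q) (hq : ¬X - C a ∣ q) : X - C a ∣ p := by
  simp only [X_sub_C_dvd_iff_isRoot_of_forall_commute ha, IsRoot,
    eval_mul_of_forall_commute ha] at hpq hq ⊢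
  exact (mul_eq_zero.mp hpq).resolve_right hq

theorem X_sub_C_pow_dvd_of_dvd_mul [IsDomain R] (ha : ∀ b, Commute b a) {p q : R[X]} {n : ℕ}
    (hpq : (X - C a) ^ n ∣ p * q) (hq : ¬X - C a ∣ q) : (X - C a) ^ n ∣ p := by
  induction n generalizing p with
  | zero => exact one_dvd p
  | succ n ih =>
    obtain ⟨p', rfl⟩ := X_sub_C_dvd_of_dvd_mul ha ((dvd_pow_self _ n.succ_ne_zero).trans hpq) hq
    rw [pow_succ', mul_assoc, mul_dvd_mul_iff_left (X_sub_C_ne_zero a)] at hpq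
    rw [pow_succ']
    exact mul_dvd_mul_left _ (ih hpq)

end CentralRoot

end Polynomial

theorem pconj_coeff (P : Hq[X]) (n : ℕ) : (pconj P).coeff n = star (P.coeff n) := by
  simp only [pconj, X_pow_mul, C_mul_X_pow_eq_monomial, finsetSum_coeff, coeff_monomial,
    Finset.sum_ite_eq', mem_support_iff]
  split_ifs with h
  · rfl
  · rw [notMem_support_iff.mp h, star_zero]

theorem pconj_mul (P Q : Hq[X]) : pconj (P * Q) = pconj Q * pconj P := by
  ext n : 1
  rw [pconj_coeff, coeff_mul, coeff_mul, star_sum, ← Finset.Nat.sum_antidiagonal_swap]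
  simp [pconj_coeff, star_mul]

theorem pconj_X_add_one : pconj (X + 1 : Hq[X]) = X + 1 := by
  ext n : 1
  simp [pconj_coeff, coeff_X, coeff_one, apply_ite star]

theorem psymm_X_add_one_mul (Q : Hq[X]) : psymm ((X + 1) * Q) = (X + 1) ^ 2 * psymm Q := by
  have hcomm : Commute (X + 1 : Hq[X]) (Q * pconj Q) := (commute_X _).add_left (.one_left _)
  rw [psymm, psymm, pconj_mul, pconj_X_add_one, mul_assoc, ← mul_assoc Q, ← hcomm.eq, sq,
    mul_assoc]

/-- The right ideal `⟨(q+1)²⟩` of ℍ[q] is quasi prime. -/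
theorem span_sq_quasiPrime :
    QuasiPrime (RightIdeal.span {((Polynomial.X + 1 : Polynomial Hq)) ^ 2}) := by
  intro P Q hPQ
  simp only [RightIdeal.mem_span_singleton] at hPQ ⊢
  by_cases hQ : X + 1 ∣ Q
  · obtain ⟨Q', rfl⟩ := hQ
    exact .inr ⟨psymm Q', psymm_X_add_one_mul Q'⟩
  · have hX : (X + 1 : Hq[X]) = X - C (-1) := by simp
    rw [hX] at hPQ hQ ⊢
    exact .inl (X_sub_C_pow_dvd_of_dvd_mul (fun b => (Commute.one_right b).neg_right) hPQ hQ)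
end

section
/- Let I = ⟨(q+1)³⟩ be the right ideal generated by (q+1)³ in the ring (ℍ[q], +, *). Then √I = ⟨q+1⟩, the right ideal generated by q+1. -/
/-!
Since `X + 1` is central, the side condition `(X + 1) * J ⊆ J` holds for every right ideal `J`,
so a completely prime `J` containing `(X + 1)^3` contains `X + 1`. Conversely `⟨X + 1⟩` is the
kernel of evaluation at the central point `-1`, a ring homomorphism onto the division ring `ℍ`;
hence it is itself completely prime, and it contains `(X + 1)^3`.
-/

open Polynomial

namespace Polynomial

variable {R : Type*} [Ring R]

theorem dvd_iff_isRoot_of_commute {c : R} (hc : ∀ a, Commute a c) {p : R[X]} :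
    X - C c ∣ p ↔ p.IsRoot c := by
  nontriviality R
  let ev : R[X] →+* R := eval₂RingHom' (RingHom.id R) c hc
  have ev_X_sub_C : ev (X - C c) = 0 := by simp [ev, eval₂RingHom']
  constructor
  · rintro ⟨q, rfl⟩
    change ev _ = 0
    rw [map_mul, ev_X_sub_C, zero_mul]
  · intro hp
    have hdeg : (p %ₘ (X - C c)).degree ≤ 0 := by
      have := degree_modByMonic_lt p (monic_X_sub_C c)
      rw [degree_X_sub_C] at this
      exact Nat.WithBot.lt_one_iff_le_zero.mp this
    have hmod : p %ₘ (X - C c) = 0 := by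
      have hev : ev (p %ₘ (X - C c)) = ev p := by
        rw [modByMonic_eq_sub_mul_div p (X - C c), map_sub, map_mul, ev_X_sub_C,
          zero_mul, sub_zero]
      rw [eq_C_of_degree_le_zero hdeg] at hev ⊢
      simpa [ev, eval₂RingHom'] using hev.trans hp
    exact (modByMonic_eq_zero_iff_dvd (monic_X_sub_C c)).mp hmod

theorem X_add_one_dvd_iff_isRoot {p : R[X]} : X + 1 ∣ p ↔ p.IsRoot (-1) := by
  rw [← dvd_iff_isRoot_of_commute fun a => Commute.neg_one_right a, map_neg, map_one,
    sub_neg_eq_add]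

theorem commute_X_add_one (p : R[X]) : Commute (X + 1) p :=
  (commute_X p).add_left (Commute.one_left p)

end Polynomial

namespace RightIdeal

variable {R : Type} [Ring R]

theorem subset_span (s : Set R) : s ⊆ (span s).carrier :=
  fun _ hx _ hs => hs hx

theorem span_subset {s : Set R} {J : RightIdeal R} (h : s ⊆ J.carrier) :
    (span s).carrier ⊆ J.carrier :=
  fun _ hx => hx J h

theorem mem_span_singleton_s12 {a x : R} : x ∈ (span {a}).carrier ↔ a ∣ x := by
  let principal : RightIdeal R :=
    { carrier := {x | a ∣ x}
      zero_mem := dvd_zero a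
      add_mem := dvd_add
      mul_mem_right := fun y hx => hx.mul_right y }
  refine ⟨fun hx => hx principal (Set.singleton_subset_iff.mpr (dvd_refl a)), ?_⟩
  rintro ⟨y, rfl⟩
  exact (span {a}).mul_mem_right y (subset_span _ rfl)

end RightIdeal

theorem completelyPrime_of_mem_iff {S : Type*} [Ring S] [NoZeroDivisors S]
    {J : RightIdeal (Polynomial Hq)} (f : Polynomial Hq →+* S)
    (hJ : ∀ P, P ∈ J.carrier ↔ f P = 0) : CompletelyPrime J := by
  intro P Q hPQ _
  rw [hJ, map_mul] at hPQ
  rw [hJ, hJ]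
  exact mul_eq_zero.mp hPQ

theorem CompletelyPrime.mem_of_pow_mem {J : RightIdeal (Polynomial Hq)} (hJ : CompletelyPrime J)
    {P : Polynomial Hq} (hP : ∀ Q, Commute P Q) {n : ℕ} (hn : n ≠ 0)
    (hPn : P ^ n ∈ J.carrier) : P ∈ J.carrier := by
  have hstable : ∀ Q ∈ J.carrier, P * Q ∈ J.carrier := fun Q hQ =>
    (hP Q).eq ▸ J.mul_mem_right P hQ
  induction n with
  | zero => exact absurd rfl hn
  | succ n ih =>
    rw [pow_succ'] at hPn
    rcases Nat.eq_zero_or_pos n with rfl | hpos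
    · simpa using hPn
    · exact (hJ P _ hPn hstable).elim id (ih hpos.ne')

theorem completelyPrime_span_X_add_one :
    CompletelyPrime (RightIdeal.span {(X + 1 : Polynomial Hq)}) :=
  completelyPrime_of_mem_iff (eval₂RingHom' (RingHom.id Hq) (-1) fun a => Commute.neg_one_right a)
    fun _ => RightIdeal.mem_span_singleton_s12.trans X_add_one_dvd_iff_isRoot

/-- For `I = ⟨(q+1)³⟩` in ℍ[q], the radical is `√I = ⟨q+1⟩`. -/
theorem radical_span_cube :
    radicalSet (RightIdeal.span {((Polynomial.X + 1 : Polynomial Hq)) ^ 3}) =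
      (RightIdeal.span {(Polynomial.X + 1 : Polynomial Hq)}).carrier := by
  apply Set.Subset.antisymm
  · have hcube : (X + 1 : Polynomial Hq) ^ 3 ∈ (RightIdeal.span {X + 1}).carrier :=
      RightIdeal.mem_span_singleton_s12.mpr (dvd_pow_self _ three_ne_zero)
    exact Set.biInter_subset_of_mem
      ⟨completelyPrime_span_X_add_one, RightIdeal.span_subset (Set.singleton_subset_iff.mpr hcube)⟩
  · simp only [radicalSet, Set.subset_iInter_iff]
    rintro J ⟨hJ, hIJ⟩
    have hX : (X + 1 : Polynomial Hq) ∈ J.carrier :=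
      hJ.mem_of_pow_mem commute_X_add_one three_ne_zero (hIJ (RightIdeal.subset_span _ rfl))
    exact RightIdeal.span_subset (Set.singleton_subset_iff.mpr hX)
end
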